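/- The sequence (γ(n))_{n ≥ 1} is strictly decreasing and converges to 0 as n → ∞. -/
import Mathlib


/-- One step of the recursion for the ice-model boundary counts
`(pa, pb, pc, pd)` on the Sierpinski gasket `SG(n)`. -/
def iceStep : ℕ × ℕ × ℕ × ℕ → ℕ × ℕ × ℕ × ℕ
  | (a, b, c, d) =>
    ((a + b) ^ 2 * (a + 3 * c + d),
     (a + b) ^ 2 * (b + 3 * c + d),
     a ^ 2 * b + b ^ 2 * a + (3 * c + d) ^ 3,
     a ^ 3 + b ^ 3 + (3 * c + d) ^ 3)

/-- The quadruple `(pa(n), pb(n), pc(n), pd(n))`. -/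
def iceSeq : ℕ → ℕ × ℕ × ℕ × ℕ
  | 0 => (0, 1, 0, 1)
  | n + 1 => iceStep (iceSeq n)

def pa (n : ℕ) : ℕ := (iceSeq n).1
def pb (n : ℕ) : ℕ := (iceSeq n).2.1
def pc (n : ℕ) : ℕ := (iceSeq n).2.2.1
def pd (n : ℕ) : ℕ := (iceSeq n).2.2.2

noncomputable def alphaSeq (n : ℕ) : ℝ := (pa n : ℝ) / (pb n : ℝ)
noncomputable def betaSeq (n : ℕ) : ℝ := (pd n : ℝ) / (pc n : ℝ)
noncomputable def gammaSeq (n : ℕ) : ℝ := (pb n : ℝ) / (pc n : ℝ)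

lemma pa_succ (n : ℕ) :
    pa (n + 1) = (pa n + pb n) ^ 2 * (pa n + 3 * pc n + pd n) := by
  simp [pa, pb, pc, pd, iceSeq, iceStep]

lemma pb_succ (n : ℕ) :
    pb (n + 1) = (pa n + pb n) ^ 2 * (pb n + 3 * pc n + pd n) := by
  simp [pa, pb, pc, pd, iceSeq, iceStep]

lemma pc_succ (n : ℕ) :
    pc (n + 1) = (pa n) ^ 2 * pb n + (pb n) ^ 2 * pa n + (3 * pc n + pd n) ^ 3 := by
  simp [pa, pb, pc, pd, iceSeq, iceStep]

lemma pd_succ (n : ℕ) :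
    pd (n + 1) = (pa n) ^ 3 + (pb n) ^ 3 + (3 * pc n + pd n) ^ 3 := by
  simp [pa, pb, pc, pd, iceSeq, iceStep]

lemma pb_pos (n : ℕ) : 0 < pb n := by
  induction n with
  | zero => decide
  | succ n ih =>
    rw [pb_succ]
    have h1 : 0 < (pa n + pb n) ^ 2 := by positivity
    have h2 : 0 < pb n + 3 * pc n + pd n := by omega
    exact Nat.mul_pos h1 h2

lemma pd_pos (n : ℕ) : 0 < pd n := by
  induction n with
  | zero => decide
  | succ n ih =>
    rw [pd_succ]
    have : 0 < (3 * pc n + pd n) ^ 3 := by positivity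
    omega

lemma pc_pos (n : ℕ) (hn : 1 ≤ n) : 0 < pc n := by
  obtain ⟨m, rfl⟩ := Nat.exists_eq_add_of_le hn
  rw [add_comm, pc_succ]
  have := pd_pos m
  have : 0 < (3 * pc m + pd m) ^ 3 := by positivity
  omega

lemma pa_le_pb (n : ℕ) : pa n ≤ pb n := by
  induction n with
  | zero => decide
  | succ n ih =>
    rw [pa_succ, pb_succ]
    exact Nat.mul_le_mul_left _ (by omega)

lemma auxA (a b s : ℕ) (hab : a ≤ b) (h5 : 5*b ≤ s) : 5*((a+b)^2*(b+s)) ≤ 4*s^3 := by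
  have hab2 : (a+b)^2 ≤ 4*b^2 := by
    calc (a+b)^2 ≤ (2*b)^2 := Nat.pow_le_pow_left (by omega) 2
      _ = 4*b^2 := by ring
  have h1 : 25*b^2 ≤ s^2 := by
    calc 25*b^2 = (5*b)*(5*b) := by ring
      _ ≤ s*s := Nat.mul_le_mul h5 h5
      _ = s^2 := by ring
  have h2 : 20*(b+s) ≤ 24*s := by omega
  have key : 25*(5*((a+b)^2*(b+s))) ≤ 25*(4*s^3) := by
    calc 25*(5*((a+b)^2*(b+s))) = (a+b)^2 * (125*(b+s)) := by ring
      _ ≤ (4*b^2) * (125*(b+s)) := Nat.mul_le_mul hab2 (le_refl _)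
      _ = (25*b^2) * (20*(b+s)) := by ring
      _ ≤ s^2 * (24*s) := Nat.mul_le_mul h1 h2
      _ = 24*s^3 := by ring
      _ ≤ 100*s^3 := Nat.mul_le_mul (by norm_num) (le_refl _)
      _ = 25*(4*s^3) := by ring
  exact Nat.le_of_mul_le_mul_left key (by norm_num)

lemma auxB (a b c s : ℕ) (hab : a ≤ b) (h5 : 5*b ≤ s) (h3 : 3*c ≤ s) :
    2*((a+b)^2*(b+s))*c ≤ b*s^3 := by
  have hab2 : (a+b)^2 ≤ 4*b^2 := by
    calc (a+b)^2 ≤ (2*b)^2 := Nat.pow_le_pow_left (by omega) 2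
      _ = 4*b^2 := by ring
  have h15 : 15*(b*c) ≤ s^2 := by
    calc 15*(b*c) = (5*b)*(3*c) := by ring
      _ ≤ s*s := Nat.mul_le_mul h5 h3
      _ = s^2 := by ring
  have h2 : 5*(b+s) ≤ 6*s := by omega
  have key : 75*(2*((a+b)^2*(b+s))*c) ≤ 75*(b*s^3) := by
    calc 75*(2*((a+b)^2*(b+s))*c) = (a+b)^2 * (150*((b+s)*c)) := by ring
      _ ≤ (4*b^2) * (150*((b+s)*c)) := Nat.mul_le_mul hab2 (le_refl _)
      _ = ((15*(b*c)) * (5*(b+s))) * (8*b) := by ring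
      _ ≤ (s^2 * (6*s)) * (8*b) := Nat.mul_le_mul (Nat.mul_le_mul h15 h2) (le_refl _)
      _ = 48*(b*s^3) := by ring
      _ ≤ 75*(b*s^3) := Nat.mul_le_mul (by norm_num) (le_refl _)
  exact Nat.le_of_mul_le_mul_left key (by norm_num)

/-- Invariant: for `n ≥ 2`, `5·pb(n) ≤ 3·pc(n) + pd(n)`. -/
lemma five_pb_le (n : ℕ) (hn : 2 ≤ n) : 5 * pb n ≤ 3 * pc n + pd n := by
  obtain ⟨m, rfl⟩ := Nat.exists_eq_add_of_le hn
  induction m with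
  | zero => decide
  | succ m ih =>
    have ih' := ih (by omega)
    have hab := pa_le_pb (2 + m)
    set a := pa (2 + m)
    set b := pb (2 + m)
    set c := pc (2 + m)
    set d := pd (2 + m)
    have key : 5 * ((a + b) ^ 2 * (b + (3 * c + d))) ≤ 4 * (3 * c + d) ^ 3 :=
      auxA a b (3 * c + d) hab ih' 
    have h2 : 2 + (m + 1) = (2 + m) + 1 := by ring
    rw [h2, pb_succ, pc_succ, pd_succ]
    have hrhs : 4 * (3 * c + d) ^ 3 ≤
        3 * (a ^ 2 * b + b ^ 2 * a + (3 * c + d) ^ 3) +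
          (a ^ 3 + b ^ 3 + (3 * c + d) ^ 3) := by
      have h1 : 0 ≤ a ^ 2 * b + b ^ 2 * a := Nat.zero_le _
      have h2 : 0 ≤ a ^ 3 + b ^ 3 := Nat.zero_le _
      omega
    calc 5 * ((a + b) ^ 2 * (b + 3 * c + d))
        = 5 * ((a + b) ^ 2 * (b + (3 * c + d))) := by ring_nf
      _ ≤ 4 * (3 * c + d) ^ 3 := key
      _ ≤ _ := hrhs

/-- Key inequality: `2·pb(n+1)·pc(n) ≤ pb(n)·pc(n+1)` for `n ≥ 1`. -/
lemma key_ineq (n : ℕ) (hn : 1 ≤ n) :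
    2 * pb (n + 1) * pc n ≤ pb n * pc (n + 1) := by
  rcases eq_or_lt_of_le hn with h | h
  · -- n = 1, direct computation
    subst h
    decide
  · have hn2 : 2 ≤ n := h
    have h5 := five_pb_le n hn2
    have hab := pa_le_pb n
    rw [pb_succ, pc_succ]
    set a := pa n
    set b := pb n
    set c := pc n
    set d := pd n
    set s := 3 * c + d with hs
    have h3c : 3 * c ≤ s := by omega
    -- 2·c·(a+b)^2·(b+s) ≤ b·s^3
    have main : 2 * ((a + b) ^ 2 * (b + s)) * c ≤ b * s ^ 3 :=
      auxB a b c s hab h5 h3c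
    calc 2 * ((a + b) ^ 2 * (b + 3 * c + d)) * c
        = 2 * ((a + b) ^ 2 * (b + s)) * c := by rw [hs]; ring_nf
      _ ≤ b * s ^ 3 := main
      _ ≤ b * (a ^ 2 * b + b ^ 2 * a + s ^ 3) := Nat.mul_le_mul_left b (by omega)

lemma gamma_pos (n : ℕ) (hn : 1 ≤ n) : 0 < gammaSeq n := by
  have hb := pb_pos n
  have hc := pc_pos n hn
  unfold gammaSeq
  positivity

lemma gamma_half (n : ℕ) (hn : 1 ≤ n) : gammaSeq (n + 1) ≤ gammaSeq n / 2 := by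
  have hc := pc_pos n hn
  have hc' := pc_pos (n + 1) (by omega)
  have hk := key_ineq n hn
  unfold gammaSeq
  rw [div_div, div_le_div_iff₀ (by exact_mod_cast hc') (by positivity)]
  have h : (2 * pb (n + 1) * pc n : ℝ) ≤ (pb n * pc (n + 1) : ℝ) := by exact_mod_cast hk
  push_cast at h ⊢
  nlinarith [h]

theorem stmt_7 :
    (∀ n : ℕ, 1 ≤ n → gammaSeq (n + 1) < gammaSeq n) ∧
    Filter.Tendsto gammaSeq Filter.atTop (nhds 0) := by
  constructor
  · intro n hn
    have h1 := gamma_half n hn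
    have h2 := gamma_pos n hn
    linarith
  · have hbound : ∀ n : ℕ, gammaSeq n ≤ 4 * (1 / 2 : ℝ) ^ n := by
      intro n
      induction n with
      | zero =>
        simp [gammaSeq, pb, pc, iceSeq]
      | succ n ih =>
        rcases Nat.eq_zero_or_pos n with rfl | hn
        · have : gammaSeq 1 = 2 := by
            norm_num [gammaSeq, pb, pc, iceSeq, iceStep]
          rw [this]; norm_num
        · have h1 := gamma_half n hn
          have : gammaSeq (n + 1) ≤ 4 * (1 / 2 : ℝ) ^ n / 2 := by linarith
          calc gammaSeq (n + 1) ≤ 4 * (1 / 2 : ℝ) ^ n / 2 := this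
            _ = 4 * (1 / 2 : ℝ) ^ (n + 1) := by ring
    have hnn : ∀ n : ℕ, 0 ≤ gammaSeq n := by
      intro n
      unfold gammaSeq
      positivity
    have hgeo : Filter.Tendsto (fun n : ℕ => 4 * (1 / 2 : ℝ) ^ n) Filter.atTop (nhds 0) := by
      have := tendsto_pow_atTop_nhds_zero_of_lt_one (by norm_num : (0:ℝ) ≤ 1/2)
        (by norm_num : (1/2:ℝ) < 1)
      simpa using this.const_mul 4
    exact squeeze_zero hnn hbound hgeo
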